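/- Addition formula for noncommutative shifted factorials of type I: Let A and C be elements of a unit ring R and let n be a nonnegative integer. Then ⌈C−A; C⌋_n − ⌈C−A; C+I⌋_n · C^{−1}A = ⌈C−A; C⌋_{n+1}, where ⌈C−A; C⌋_n = ∏_{j=1}^{n} (C+(n−j)I)^{−1}(C−A+(n−j)I) (ordered product, left to right in increasing j). -/
import Mathlib


/-- Ordered (noncommutative) product `f 0 * f 1 * ⋯ * f (n-1)`. -/
def opr {R : Type*} [Ring R] (n : ℕ) (f : ℕ → R) : R :=
  ((List.range n).map f).prod

lemma opr_zero {R : Type*} [Ring R] (f : ℕ → R) : opr 0 f = 1 := rfl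

lemma opr_succ_left {R : Type*} [Ring R] (n : ℕ) (f : ℕ → R) :
    opr (n + 1) f = f 0 * opr n (fun j => f (j + 1)) := by
  unfold opr
  rw [List.range_succ_eq_map, List.map_cons, List.prod_cons, List.map_map]
  rfl

lemma key_swap {R : Type*} [Ring R] (A X P : R) (h : IsUnit X) :
    A * (Ring.inverse X * ((X - A) * P)) = (X - A) * (Ring.inverse X * (A * P)) := by
  have h1 : A * (Ring.inverse X * (X - A)) = (X - A) * Ring.inverse X * A := by
    simp [mul_sub, sub_mul, Ring.inverse_mul_cancel X h, Ring.mul_inverse_cancel X h,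
      mul_assoc]
  calc A * (Ring.inverse X * ((X - A) * P))
      = (A * (Ring.inverse X * (X - A))) * P := by simp only [mul_assoc]
    _ = ((X - A) * Ring.inverse X * A) * P := by rw [h1]
    _ = (X - A) * (Ring.inverse X * (A * P)) := by simp only [mul_assoc]

lemma aux_swap {R : Type*} [Ring R] (A C : R) (n : ℕ)
    (hC : ∀ m : ℕ, m < n + 1 → IsUnit (C + (m : R))) :
    A * opr n (fun j =>
        Ring.inverse (C + ((n - 1 - j : ℕ) : R)) * (C - A + ((n - 1 - j : ℕ) : R))) =
    (C + (n : R)) * (opr n (fun j =>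
        Ring.inverse (C + 1 + ((n - 1 - j : ℕ) : R)) * (C - A + ((n - 1 - j : ℕ) : R))) *
      (Ring.inverse C * A)) := by
  induction n with
  | zero =>
      have h0 : IsUnit C := by simpa using hC 0 (by norm_num)
      simp [opr_zero, Ring.mul_inverse_cancel_left _ _ h0]
  | succ n ih =>
      have hC' : ∀ m : ℕ, m < n + 1 → IsUnit (C + (m : R)) := fun m hm => hC m (by omega)
      have hCn : IsUnit (C + (n : R)) := hC n (by omega)
      have hCn1 : IsUnit (C + ((n + 1 : ℕ) : R)) := hC (n + 1) (by omega)
      rw [opr_succ_left, opr_succ_left]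
      have e1 : ∀ j : ℕ, (n + 1 - 1 - (j + 1)) = (n - 1 - j) := by omega
      have e2 : ((n + 1 - 1 - 0 : ℕ) : R) = (n : R) := by norm_num
      simp only [e1, e2]
      have hsub : C - A + (n : R) = (C + (n : R)) - A := by rw [sub_add_eq_add_sub]
      have hcast : C + 1 + (n : R) = C + ((n + 1 : ℕ) : R) := by
        push_cast
        rw [add_right_comm, add_assoc]
      rw [hsub, hcast]
      simp only [mul_assoc]
      rw [key_swap A (C + (n : R)) _ hCn, ih hC']
      rw [Ring.inverse_mul_cancel_left _ _ hCn, Ring.mul_inverse_cancel_left _ _ hCn1]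

/-- Addition formula for noncommutative shifted factorials of type I:
`⌈C−A; C⌋_n − ⌈C−A; C+I⌋_n C⁻¹A = ⌈C−A; C⌋_{n+1}`. -/
theorem additionTypeI {R : Type*} [Ring R] (A C : R) (n : ℕ)
    (hC : ∀ m : ℕ, m < n + 1 → IsUnit (C + (m : R))) :
    opr n (fun j =>
        Ring.inverse (C + ((n - 1 - j : ℕ) : R)) * (C - A + ((n - 1 - j : ℕ) : R))) -
      opr n (fun j =>
        Ring.inverse (C + 1 + ((n - 1 - j : ℕ) : R)) * (C - A + ((n - 1 - j : ℕ) : R))) *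
        (Ring.inverse C * A) =
    opr (n + 1) (fun j =>
      Ring.inverse (C + ((n - j : ℕ) : R)) * (C - A + ((n - j : ℕ) : R))) := by
  have hCn : IsUnit (C + (n : R)) := hC n (by omega)
  set P := opr n (fun j =>
      Ring.inverse (C + ((n - 1 - j : ℕ) : R)) * (C - A + ((n - 1 - j : ℕ) : R))) with hP
  set Q := opr n (fun j =>
      Ring.inverse (C + 1 + ((n - 1 - j : ℕ) : R)) * (C - A + ((n - 1 - j : ℕ) : R))) with hQ
  have key : A * P = (C + (n : R)) * (Q * (Ring.inverse C * A)) := aux_swap A C n hC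
  have hQ' : Q * (Ring.inverse C * A) = Ring.inverse (C + (n : R)) * (A * P) := by
    rw [key, Ring.inverse_mul_cancel_left _ _ hCn]
  rw [opr_succ_left]
  have e1 : ∀ j : ℕ, ((n - (j + 1) : ℕ) : R) = ((n - 1 - j : ℕ) : R) := by
    intro j; congr 1; omega
  have e2 : ((n - 0 : ℕ) : R) = (n : R) := by norm_num
  simp only [e1, e2]
  rw [← hP]
  rw [hQ']
  have hsub : C - A + (n : R) = (C + (n : R)) - A := by rw [sub_add_eq_add_sub]
  rw [hsub, mul_sub, sub_mul, Ring.inverse_mul_cancel _ hCn, one_mul, mul_assoc]
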